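/- Let G be a topological group and suppose G = ⋃_{a ∈ A} K a K where K is a subgroup that is sequentially compact and A ⊆ G. Suppose G is topologically simple and: every sequence (aᵢ) in A either has a constant subsequence or has a subsequence with nontrivial contraction group. Then for every continuous homomorphism φ : G → H into a Hausdorff topological group H, the image φ(G) is sequentially closed in H. -/

import Mathlib

/-!
The kernel of `φ` is a closed normal subgroup, so `φ` is trivial or injective; the trivial case
is immediate. If `φ` is injective and `φ (uᵢ) → h`, write `uᵢ = kᵢ aᵢ k'ᵢ`; by sequential
compactness of `K` we may assume `kᵢ → k₀` and `k'ᵢ → k₀'`, so that `φ (aᵢ)` converges to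
`h' = φ(k₀)⁻¹ h φ(k₀')⁻¹`. A constant subsequence `aᵢ = c` gives `h = φ (k₀ c k₀')`. A subsequence
contracting some `x ≠ 1` is impossible: `φ (aᵢ x aᵢ⁻¹)` tends both to `1` and to `h' φ(x) h'⁻¹`,
forcing `φ x = 1`.
-/

open Filter Topology

theorem MonoidHom.isClosed_ker {G H : Type*} [Group G] [TopologicalSpace G] [Group H]
    [TopologicalSpace H] [T1Space H] {φ : G →* H} (hφ : Continuous φ) :
    IsClosed (φ.ker : Set G) :=
  isClosed_singleton.preimage hφ

theorem IsSeqCompact.exists_subseq_tendsto_of_mul_mul {H : Type*} [Group H]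
    [TopologicalSpace H] [IsTopologicalGroup H] {S : Set H} (hS : IsSeqCompact S)
    {p b q : ℕ → H} (hp : ∀ i, p i ∈ S) (hq : ∀ i, q i ∈ S) {h : H}
    (hlim : Tendsto (fun i => p i * b i * q i) atTop (𝓝 h)) :
    ∃ s ∈ S, ∃ t ∈ S, ∃ θ : ℕ → ℕ, StrictMono θ ∧
      Tendsto (b ∘ θ) atTop (𝓝 (s⁻¹ * h * t⁻¹)) := by
  obtain ⟨s, hs, θ₁, hθ₁, hps⟩ := hS hp
  obtain ⟨t, ht, θ₂, hθ₂, hqt⟩ := hS fun i => hq (θ₁ i)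
  have hb : ∀ i, (p i)⁻¹ * (p i * b i * q i) * (q i)⁻¹ = b i := fun i => by group
  refine ⟨s, hs, t, ht, θ₁ ∘ θ₂, hθ₁.comp hθ₂, Tendsto.congr (fun j => hb _) ?_⟩
  exact ((hps.comp hθ₂.tendsto_atTop).inv.mul
    (hlim.comp (hθ₁.comp hθ₂).tendsto_atTop)).mul hqt.inv

theorem MonoidHom.map_eq_one_of_tendsto_conj {G H : Type*} [Group G] [TopologicalSpace G]
    [Group H] [TopologicalSpace H] [IsTopologicalGroup H] [T2Space H] {φ : G →* H}
    (hφ : Continuous φ) {ι : Type*} {l : Filter ι} [l.NeBot] {a : ι → G} {x : G} {y : H}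
    (hay : Tendsto (φ ∘ a) l (𝓝 y)) (hconj : Tendsto (fun i => a i * x * (a i)⁻¹) l (𝓝 1)) :
    φ x = 1 := by
  have hto_one : Tendsto (fun i => φ (a i) * φ x * (φ (a i))⁻¹) l (𝓝 1) := by
    simpa only [Function.comp_def, map_mul, map_inv, map_one] using
      (hφ.tendsto 1).comp hconj
  have hto_conj : Tendsto (fun i => φ (a i) * φ x * (φ (a i))⁻¹) l (𝓝 (y * φ x * y⁻¹)) :=
    (hay.mul tendsto_const_nhds).mul hay.inv
  exact conj_eq_one_iff.mp (tendsto_nhds_unique hto_conj hto_one)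

theorem stmt16 {G : Type u} [Group G] [TopologicalSpace G] [IsTopologicalGroup G]
    (K : Subgroup G) (hK : IsSeqCompact (K : Set G)) (A : Set G)
    (hdec : ∀ g : G, ∃ k ∈ K, ∃ a ∈ A, ∃ k' ∈ K, g = k * a * k')
    (hsimple : ∀ N : Subgroup G, N.Normal → IsClosed (N : Set G) → N = ⊥ ∨ N = ⊤)
    (hseq : ∀ a : ℕ → G, (∀ i, a i ∈ A) →
      (∃ ψ : ℕ → ℕ, StrictMono ψ ∧ ∃ c : G, ∀ j, a (ψ j) = c) ∨
      (∃ ψ : ℕ → ℕ, StrictMono ψ ∧ ∃ x : G, x ≠ 1 ∧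
        Tendsto (fun j => a (ψ j) * x * (a (ψ j))⁻¹) atTop (nhds 1))) :
    ∀ (H : Type v) [Group H] [TopologicalSpace H] [IsTopologicalGroup H] [T2Space H]
      (φ : G →* H), Continuous φ →
      ∀ h : H, (∃ u : ℕ → G, Tendsto (fun i => φ (u i)) atTop (nhds h)) →
        h ∈ Set.range φ := by
  intro H _ _ _ _ φ hφ h ⟨u, hu⟩
  rcases hsimple φ.ker φ.normal_ker (φ.isClosed_ker hφ) with hbot | htop
  · choose k hk a ha k' hk' hu_eq using fun i => hdec (u i)
    have hlim : Tendsto (fun i => φ (k i) * φ (a i) * φ (k' i)) atTop (𝓝 h) := by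
      simpa only [hu_eq, map_mul] using hu
    obtain ⟨_, ⟨k₀, -, rfl⟩, _, ⟨k₀', -, rfl⟩, θ, hθ, hlimθ⟩ :=
      (hK.image hφ.seqContinuous).exists_subseq_tendsto_of_mul_mul
        (fun i => Set.mem_image_of_mem φ (hk i)) (fun i => Set.mem_image_of_mem φ (hk' i)) hlim
    rcases hseq (a ∘ θ) (fun j => ha (θ j)) with ⟨ψ, hψ, c, hc⟩ | ⟨ψ, hψ, x, hx, hconj⟩
    · replace hc : ∀ j, a (θ (ψ j)) = c := hc
      have hφc : φ c = (φ k₀)⁻¹ * h * (φ k₀')⁻¹ := by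
        refine (tendsto_const_nhds_iff (l := (atTop : Filter ℕ))).mp ?_
        simpa only [Function.comp_def, hc] using hlimθ.comp hψ.tendsto_atTop
      exact ⟨k₀ * c * k₀', by rw [map_mul, map_mul, hφc]; group⟩
    · have hφx : φ x = 1 := φ.map_eq_one_of_tendsto_conj hφ
        (hlimθ.comp hψ.tendsto_atTop) hconj
      exact absurd ((φ.ker_eq_bot_iff.mp hbot) (hφx.trans φ.map_one.symm)) hx
  · have hφ_one : φ = 1 := φ.ker_eq_top_iff.mp htop
    refine ⟨1, (tendsto_const_nhds_iff (l := (atTop : Filter ℕ))).mp ?_⟩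
    simpa only [hφ_one, MonoidHom.one_apply] using hu
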